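/- arXiv:2205.13374 — 3 statements merged into one kernel-verified Lean document; each statement's English description precedes it below -/
import Mathlib

section
/- Let G be a formal power series in x, y_1, …, y_t over ℚ with zero constant term satisfying G = x·∏_{i=1}^{t}(1 + y_i·G). Then for every integer n ≥ 1 and every tuple of natural numbers (a_1, …, a_t) with a_1 + ⋯ + a_t = n − 1, the coefficient of x^n·y_1^{a_1}⋯y_t^{a_t} in G equals (1/n)·C(n,a_1)·C(n,a_2)⋯C(n,a_t), where C(n,k) denotes the binomial coefficient. -/
/-!
Strengthen the claim to all powers of `G`: the coefficient of `x^n y^a` in `G^k` is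
`(k/n) ∏ C(n, a_i)` when `k + ∑ a_i = n` (and `0` otherwise). Since
`G^k = x^k ∏ (1 + y_i G)^k = ∑_j x^k y^j ∏ C(k, j_i) G^{|j|}`, the coefficients of `G^k` in
`x`-degree `n` are determined by those of lower powers in `x`-degree `n - k`, so strong
induction on `n` reduces everything to the identity
`∑_j ∏ C(k, j_i) · (|j|/m) ∏ C(m, a_i - j_i) = (k/(k+m)) ∏ C(k+m, a_i)` for `∑ a_i = m`.
Splitting `|j| = ∑ j_i`, it factors coordinatewise into Vandermonde's identity and its
weighted form `∑_u u C(k,u) C(m,a-u) = (k a/(k+m)) C(k+m, a)`.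
-/

open Finset

namespace Nat

theorem sum_range_choose_mul_choose (k m a : ℕ) :
    ∑ u ∈ range (a + 1), k.choose u * m.choose (a - u) = (k + m).choose a := by
  rw [add_choose_eq, Finset.Nat.sum_antidiagonal_eq_sum_range_succ_mk]

theorem sum_range_mul_choose_mul_choose (k m a : ℕ) :
    (k + m) * ∑ u ∈ range (a + 1), u * (k.choose u * m.choose (a - u)) =
      k * a * (k + m).choose a := by
  rcases k with _ | k
  · rw [sum_eq_zero fun u _ => ?_]
    · simp
    · rcases u with _ | u <;> simp
  rcases a with _ | a
  · simp
  rw [sum_range_succ']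
  simp only [Nat.zero_mul, Nat.add_zero, Nat.add_sub_add_right]
  calc (k + 1 + m) * ∑ u ∈ range (a + 1), (u + 1) * ((k + 1).choose (u + 1) * m.choose (a - u))
      = (k + m + 1) * ((k + 1) * ∑ u ∈ range (a + 1), k.choose u * m.choose (a - u)) := by
        rw [Nat.add_right_comm k 1 m, mul_sum (range (a + 1)) _ (k + 1)]
        congr 1
        refine sum_congr rfl fun u _ => ?_
        rw [← Nat.mul_assoc, Nat.mul_comm (u + 1), ← add_one_mul_choose_eq, Nat.mul_assoc]
    _ = (k + 1) * (a + 1) * (k + 1 + m).choose (a + 1) := by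
        rw [sum_range_choose_mul_choose, Nat.mul_left_comm, add_one_mul_choose_eq,
          Nat.add_right_comm k 1 m]
        ring

end Nat

theorem Finset.sum_piFinset_mul_prod {ι κ R : Type*} [DecidableEq ι] [Fintype ι]
    [CommSemiring R] (s : ι → Finset κ) (f : ι → κ → R) (g : κ → R) (i : ι) :
    ∑ j ∈ Fintype.piFinset s, g (j i) * ∏ i', f i' (j i') =
      (∑ u ∈ s i, g u * f i u) * ∏ i' ∈ univ.erase i, ∑ u ∈ s i', f i' u := by
  set F := Function.update f i fun u => g u * f i u
  have hF : ∀ j : ι → κ, ∏ i', F i' (j i') = g (j i) * ∏ i', f i' (j i') := by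
    intro j
    rw [← mul_prod_erase univ _ (mem_univ i),
      ← mul_prod_erase univ (fun i' => f i' (j i')) (mem_univ i), ← mul_assoc]
    congr 1
    · simp [F]
    · exact prod_congr rfl fun i' hi' => by simp [F, ne_of_mem_erase hi']
  calc ∑ j ∈ Fintype.piFinset s, g (j i) * ∏ i', f i' (j i')
      = ∏ i', ∑ u ∈ s i', F i' u := by simp_rw [prod_univ_sum, hF]
    _ = _ := by
      rw [← mul_prod_erase univ _ (mem_univ i)]
      congr 1
      · simp [F]
      · exact prod_congr rfl fun i' hi' => by simp [F, ne_of_mem_erase hi']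

section

variable {ι : Type*} [Fintype ι]

theorem sum_piFinset_sum_mul_prod_choose_mul_choose [DecidableEq ι] (k m : ℕ) (a : ι → ℕ)
    (hkm : k + m ≠ 0) :
    ∑ j ∈ Fintype.piFinset (fun i => range (a i + 1)),
        (∑ i, (j i : ℚ)) * ∏ i, ((k.choose (j i) : ℚ) * m.choose (a i - j i)) =
      k * (∑ i, (a i : ℚ)) / (k + m) * ∏ i, ((k + m).choose (a i) : ℚ) := by
  have hkm' : (k + m : ℚ) ≠ 0 := by exact_mod_cast hkm
  have vandermonde (i : ι) :
      ∑ u ∈ range (a i + 1), (k.choose u : ℚ) * m.choose (a i - u) = (k + m).choose (a i) := by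
    exact_mod_cast Nat.sum_range_choose_mul_choose k m (a i)
  have weighted (i : ι) :
      ∑ u ∈ range (a i + 1), (u : ℚ) * ((k.choose u : ℚ) * m.choose (a i - u)) =
        k * a i / (k + m) * (k + m).choose (a i) := by
    rw [div_mul_eq_mul_div, eq_div_iff hkm', mul_comm]
    exact_mod_cast Nat.sum_range_mul_choose_mul_choose k m (a i)
  calc ∑ j ∈ Fintype.piFinset (fun i => range (a i + 1)),
        (∑ i, (j i : ℚ)) * ∏ i, ((k.choose (j i) : ℚ) * m.choose (a i - j i))
      = ∑ i, k * a i / (k + m) * ∏ i', ((k + m).choose (a i') : ℚ) := by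
        simp_rw [sum_mul]
        rw [sum_comm]
        refine sum_congr rfl fun i _ => ?_
        rw [sum_piFinset_mul_prod _ (fun i u => (k.choose u : ℚ) * m.choose (a i - u)),
          weighted, prod_congr rfl fun i' _ => vandermonde i', mul_assoc,
          mul_prod_erase univ (fun i' => ((k + m).choose (a i') : ℚ)) (mem_univ i)]
    _ = k * (∑ i, (a i : ℚ)) / (k + m) * ∏ i, ((k + m).choose (a i) : ℚ) := by
        rw [← sum_mul, ← sum_div, ← mul_sum]

/-- The coefficient of `x^n y^a` in `G^k`, which counts forests of `k` trees; the case
`n = 0` is the empty forest, where the formula `k/n` would read `0/0`. -/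
def forestCoeff (k n : ℕ) (a : ι → ℕ) : ℚ :=
  if k + ∑ i, a i = n then if n = 0 then 1 else k / n * ∏ i, (n.choose (a i) : ℚ) else 0

theorem forestCoeff_zero_left (n : ℕ) (a : ι → ℕ) :
    forestCoeff 0 n a = if n = 0 ∧ a = 0 then 1 else 0 := by
  by_cases hn : n = 0
  · subst hn
    simp [forestCoeff, sum_eq_zero_iff, funext_iff]
  · simp [forestCoeff, hn]

theorem forestCoeff_sum_tsub {j a : ι → ℕ} (hj : j ≤ a) (m : ℕ) :
    forestCoeff (∑ i, j i) m (a - j) =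
      if ∑ i, a i = m then
        if m = 0 then 1 else (∑ i, (j i : ℚ)) / m * ∏ i, (m.choose (a i - j i) : ℚ)
      else 0 := by
  have hsum : ∑ i, j i + ∑ i, (a i - j i) = ∑ i, a i := by
    rw [sum_tsub_distrib _ fun i _ => hj i]
    exact Nat.add_sub_cancel' (sum_le_sum fun i _ => hj i)
  simp only [forestCoeff, Pi.sub_apply, hsum, Nat.cast_sum]

theorem forestCoeff_eq_sum [DecidableEq ι] {k : ℕ} (hk : k ≠ 0) (n : ℕ) (a : ι → ℕ) :
    forestCoeff k n a =
      if k ≤ n then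
        ∑ j ∈ Fintype.piFinset (fun i => range (a i + 1)),
          (∏ i, (k.choose (j i) : ℚ)) * forestCoeff (∑ i, j i) (n - k) (a - j)
      else 0 := by
  by_cases hkn : k ≤ n
  swap
  · rw [if_neg hkn, forestCoeff, if_neg (by omega)]
  obtain ⟨m, rfl⟩ := Nat.exists_eq_add_of_le hkn
  have hbox (j) (hj : j ∈ Fintype.piFinset fun i => range (a i + 1)) : j ≤ a := fun i =>
    Nat.lt_succ_iff.mp (mem_range.mp (Fintype.mem_piFinset.mp hj i))
  rw [if_pos hkn, Nat.add_sub_cancel_left,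
    sum_congr rfl fun j hj => by rw [forestCoeff_sum_tsub (hbox j hj)]]
  simp only [forestCoeff, Nat.add_left_cancel_iff, Nat.add_eq_zero_iff, hk, false_and, if_false]
  split_ifs with ha hm
  · have : a = 0 := funext fun i => sum_eq_zero_iff.mp (ha.trans hm) i (mem_univ i)
    subst this hm
    simp [hk]
  · have hm' : (m : ℚ) ≠ 0 := by exact_mod_cast hm
    calc (k : ℚ) / ↑(k + m) * ∏ i, ((k + m).choose (a i) : ℚ)
        = 1 / m * (k * (∑ i, (a i : ℚ)) / (k + m) * ∏ i, ((k + m).choose (a i) : ℚ)) := by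
          rw [← Nat.cast_sum, ha]
          field_simp
          push_cast
          ring
      _ = ∑ j ∈ Fintype.piFinset (fun i => range (a i + 1)), (∏ i, (k.choose (j i) : ℚ)) *
            ((∑ i, (j i : ℚ)) / m * ∏ i, (m.choose (a i - j i) : ℚ)) := by
          rw [← sum_piFinset_sum_mul_prod_choose_mul_choose k m a (by omega), mul_sum]
          refine sum_congr rfl fun j _ => ?_
          rw [prod_mul_distrib]
          ring
  · simp

end

namespace MvPowerSeries

theorem monomial_eq_C_mul_prod_X_pow {σ R : Type*} [Fintype σ] [CommSemiring R]
    (m : σ →₀ ℕ) (c : R) :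
    monomial m c = C c * ∏ s, (X s : MvPowerSeries σ R) ^ m s := by
  simp_rw [X_pow_eq, prod_monomial, prod_const_one, Finsupp.univ_sum_single,
    ← monomial_zero_eq_C_apply, monomial_mul_monomial, zero_add, mul_one]

end MvPowerSeries

open MvPowerSeries

section

variable {t : ℕ}

noncomputable def consExp (n : ℕ) (a : Fin t → ℕ) : Fin (t + 1) →₀ ℕ :=
  Finsupp.equivFunOnFinite.symm (Fin.cons n a)

theorem consExp_le_consExp {k n : ℕ} {j a : Fin t → ℕ} :
    consExp k j ≤ consExp n a ↔ k ≤ n ∧ ∀ i, j i ≤ a i := by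
  rw [← Finsupp.coe_le_coe]
  exact Fin.cons_le_cons (α := fun _ => ℕ)

theorem consExp_sub_consExp (n k : ℕ) (a j : Fin t → ℕ) :
    consExp n a - consExp k j = consExp (n - k) (a - j) := by
  ext s
  cases s using Fin.cases <;> simp [consExp]

theorem consExp_eq_zero {n : ℕ} {a : Fin t → ℕ} : consExp n a = 0 ↔ n = 0 ∧ a = 0 := by
  rw [← Finsupp.coe_eq_zero]
  exact Matrix.cons_eq_zero_iff

theorem monomial_consExp {R : Type*} [CommSemiring R] (k : ℕ) (j : Fin t → ℕ) (c : R) :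
    monomial (consExp k j) c = C c * (X 0 ^ k * ∏ i, X i.succ ^ j i) := by
  rw [monomial_eq_C_mul_prod_X_pow, Fin.prod_univ_succ]
  simp [consExp]

variable {G : MvPowerSeries (Fin (t + 1)) ℚ}

theorem pow_eq_sum_monomial_mul_pow
    (hG : G = X 0 * ∏ i : Fin t, (1 + X i.succ * G)) (k : ℕ) :
    G ^ k = ∑ j ∈ Fintype.piFinset (fun _ => range (k + 1)),
      monomial (consExp k j) (∏ i, (k.choose (j i) : ℚ)) * G ^ ∑ i, j i := by
  have binomial (i : Fin t) : (1 + X i.succ * G) ^ k =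
      ∑ u ∈ range (k + 1), C (k.choose u : ℚ) * (X i.succ ^ u * G ^ u) := by
    rw [add_comm 1, add_pow]
    refine sum_congr rfl fun u _ => ?_
    rw [one_pow, mul_one, mul_pow, ← map_natCast C, mul_comm]
  conv_lhs => rw [hG, mul_pow, ← prod_pow]
  simp_rw [binomial, prod_univ_sum, mul_sum]
  refine sum_congr rfl fun j _ => ?_
  simp_rw [monomial_consExp, prod_mul_distrib, prod_pow_eq_pow_sum, map_prod]
  ring

theorem coeff_pow_consExp
    (hG : G = X 0 * ∏ i : Fin t, (1 + X i.succ * G)) (k n : ℕ) (a : Fin t → ℕ) :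
    coeff (consExp n a) (G ^ k) =
      if k ≤ n then
        ∑ j ∈ Fintype.piFinset (fun i => range (a i + 1)),
          (∏ i, (k.choose (j i) : ℚ)) * coeff (consExp (n - k) (a - j)) (G ^ ∑ i, j i)
      else 0 := by
  have mem_box {j : Fin t → ℕ} :
      j ∈ Fintype.piFinset (fun i => range (a i + 1)) ↔ ∀ i, j i ≤ a i := by
    simp only [Fintype.mem_piFinset, mem_range, Nat.lt_succ_iff]
  rw [pow_eq_sum_monomial_mul_pow hG, map_sum]
  simp only [coeff_monomial_mul, consExp_le_consExp, consExp_sub_consExp]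
  split_ifs with hkn
  · simp only [hkn, true_and]
    rw [← sum_filter]
    refine sum_subset (fun j hj => mem_box.mpr (mem_filter.mp hj).2) fun j hj hj' => ?_
    obtain ⟨i, hi⟩ : ∃ i, k < j i := by
      simpa [mem_box.mp hj, Fintype.mem_piFinset] using hj'
    rw [prod_eq_zero (mem_univ i) (by rw [Nat.choose_eq_zero_of_lt hi, Nat.cast_zero]), zero_mul]
  · simp [hkn]

theorem coeff_pow_consExp_eq_forestCoeff
    (hG : G = X 0 * ∏ i : Fin t, (1 + X i.succ * G)) (n : ℕ) :
    ∀ (k : ℕ) (a : Fin t → ℕ), coeff (consExp n a) (G ^ k) = forestCoeff k n a := by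
  induction n using Nat.strong_induction_on with
  | _ n ih =>
  intro k a
  rcases eq_or_ne k 0 with rfl | hk
  · simp only [pow_zero, coeff_one, consExp_eq_zero, forestCoeff_zero_left]
  rw [coeff_pow_consExp hG, forestCoeff_eq_sum hk]
  split_ifs with hkn
  · exact sum_congr rfl fun j _ => by rw [ih (n - k) (by omega)]
  · rfl

end

theorem tary_tree_gf_coeff_general (t : ℕ)
    (G : MvPowerSeries (Fin (t + 1)) ℚ)
    (hG : G = MvPowerSeries.X 0 * ∏ i : Fin t, (1 + MvPowerSeries.X i.succ * G))
    (n : ℕ) (hn : 1 ≤ n) (a : Fin t → ℕ) (ha : ∑ i, a i = n - 1) :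
    MvPowerSeries.coeff (Finsupp.equivFunOnFinite.symm (Fin.cons n a)) G =
      (1 / n : ℚ) * ∏ i, (n.choose (a i) : ℚ) := by
  have h := coeff_pow_consExp_eq_forestCoeff hG n 1 a
  rwa [pow_one, consExp, forestCoeff, if_pos (by omega), if_neg (by omega), Nat.cast_one] at h

/-- Let `G` be a formal power series in `x, y_1, …, y_t` over `ℚ`
(variable `0` is `x`, variable `i.succ` is `y_i`) with zero constant term satisfying
`G = x·∏_{i=1}^t (1 + y_i·G)`. Then for every `n ≥ 1` and every tuple `a` with
`∑ a_i = n - 1`, the coefficient of `x^n·y_1^{a_1}⋯y_t^{a_t}` in `G` equals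
`(1/n)·∏_{i=1}^t C(n, a_i)`. -/
theorem tary_tree_gf_coeff (t : ℕ) (ht : 1 ≤ t)
    (G : MvPowerSeries (Fin (t + 1)) ℚ)
    (hG0 : MvPowerSeries.constantCoeff G = 0)
    (hG : G = MvPowerSeries.X 0 * ∏ i : Fin t, (1 + MvPowerSeries.X i.succ * G))
    (n : ℕ) (hn : 1 ≤ n) (a : Fin t → ℕ) (ha : ∑ i, a i = n - 1) :
    MvPowerSeries.coeff (Finsupp.equivFunOnFinite.symm (Fin.cons n a)) G =
      (1 / n : ℚ) * ∏ i, (n.choose (a i) : ℚ) :=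
  tary_tree_gf_coeff_general t G hG n hn a ha
end

section
/- Let G be a formal power series in x, y_1, …, y_t over ℚ with zero constant term satisfying G = x·∏_{i=1}^{t}(1 + y_i·G). Then for all integers n ≥ 1 and m with 1 ≤ m ≤ n, and every tuple of natural numbers (a_1, …, a_t) with a_1 + ⋯ + a_t = n − m, the coefficient of x^n·y_1^{a_1}⋯y_t^{a_t} in the m-th power G^m equals (m/n)·C(n,a_1)·C(n,a_2)⋯C(n,a_t), where C(n,k) denotes the binomial coefficient. -/
/-!
Expanding `G ^ m = x ^ m * ∏ i, (1 + y_i * G) ^ m` binomially expresses the coefficient of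
`x ^ n * y ^ a` in `G ^ m` through the coefficients of `x ^ (n - m) * y ^ (a - b)` in `G ^ |b|`,
`b ≤ a`. By strong induction on `n`, with `N = |a| = n - m`, the claim reduces to
`∑_{b ≤ a} |b| ∏ C(m, b_i) C(N, a_i - b_i) = m N / (m + N) ∏ C(m + N, a_i)`, which follows
one coordinate at a time from Vandermonde's convolution and `k C(m, k) = m C(m - 1, k - 1)`.
-/

open Finset MvPowerSeries

theorem sum_range_choose_mul_choose (m N c : ℕ) :
    ∑ k ∈ range (c + 1), m.choose k * N.choose (c - k) = (m + N).choose c := by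
  rw [Nat.add_choose_eq,
    Finset.Nat.sum_antidiagonal_eq_sum_range_succ fun i j => m.choose i * N.choose j]

theorem add_mul_sum_range_mul_choose_mul_choose (m N c : ℕ) :
    (m + N) * ∑ k ∈ range (c + 1), k * (m.choose k * N.choose (c - k)) =
      m * c * (m + N).choose c := by
  rcases m with _ | m
  · rw [sum_eq_zero fun k _ => by cases k <;> simp]
    simp
  rcases c with _ | c
  · simp
  have hshift : ∀ k ∈ range (c + 1),
      (k + 1) * ((m + 1).choose (k + 1) * N.choose (c + 1 - (k + 1))) =
        (m + 1) * (m.choose k * N.choose (c - k)) := by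
    intro k _
    rw [Nat.add_sub_add_right, ← mul_assoc, mul_comm (k + 1), ← Nat.add_one_mul_choose_eq m k]
    ring
  rw [sum_range_succ', sum_congr rfl hshift, ← mul_sum, sum_range_choose_mul_choose, zero_mul,
    add_zero, Nat.add_right_comm, mul_left_comm, Nat.add_one_mul_choose_eq]
  ring

theorem sum_piFinset_apply_mul_prod {ι κ R : Type*} [Fintype ι] [DecidableEq ι] [CommSemiring R]
    (s : ι → Finset κ) (f : ι → κ → R) (g : κ → R) (j : ι) :
    ∑ b ∈ Fintype.piFinset s, g (b j) * ∏ i, f i (b i) =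
      (∑ k ∈ s j, g k * f j k) * ∏ i ∈ univ.erase j, ∑ k ∈ s i, f i k := by
  set F : ι → κ → R := Function.update f j (fun k => g k * f j k)
  have hF : ∀ b : ι → κ, ∏ i, F i (b i) = g (b j) * ∏ i, f i (b i) := by
    intro b
    rw [← mul_prod_erase univ _ (mem_univ j),
      ← mul_prod_erase univ (fun i => f i (b i)) (mem_univ j)]
    simp only [F, Function.update_self, mul_assoc]
    congr 2
    exact prod_congr rfl fun i hi => by rw [Function.update_of_ne (ne_of_mem_erase hi)]
  calc ∑ b ∈ Fintype.piFinset s, g (b j) * ∏ i, f i (b i)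
      = ∑ b ∈ Fintype.piFinset s, ∏ i, F i (b i) := sum_congr rfl fun b _ => (hF b).symm
    _ = ∏ i, ∑ k ∈ s i, F i k := (prod_univ_sum s F).symm
    _ = _ := by
      rw [← mul_prod_erase univ _ (mem_univ j)]
      simp only [F, Function.update_self]
      congr 1
      exact prod_congr rfl fun i hi => by rw [Function.update_of_ne (ne_of_mem_erase hi)]

theorem add_mul_sum_Iic_sum_mul_prod_choose {ι : Type*} [Fintype ι] [DecidableEq ι]
    (m N : ℕ) (a : ι → ℕ) :
    (m + N) * ∑ b ∈ Iic a, (∑ i, b i) * ∏ i, m.choose (b i) * N.choose (a i - b i) =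
      m * (∑ i, a i) * ∏ i, (m + N).choose (a i) := by
  have hvand : ∀ i, ∑ k ∈ Iic (a i), m.choose k * N.choose (a i - k) = (m + N).choose (a i) :=
    fun i => by rw [← Nat.range_succ_eq_Iic, sum_range_choose_mul_choose]
  have hcoord : ∀ j,
      (m + N) * ∑ b ∈ Iic a, b j * ∏ i, m.choose (b i) * N.choose (a i - b i) =
        m * a j * ∏ i, (m + N).choose (a i) := by
    intro j
    rw [show Iic a = Fintype.piFinset fun i => Iic (a i) from rfl,
      sum_piFinset_apply_mul_prod _ (fun i k => m.choose k * N.choose (a i - k)) (fun k => k),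
      prod_congr rfl fun i _ => hvand i,
      ← mul_assoc, ← Nat.range_succ_eq_Iic, add_mul_sum_range_mul_choose_mul_choose,
      ← mul_prod_erase univ (fun i => (m + N).choose (a i)) (mem_univ j), mul_assoc]
  simp_rw [sum_mul]
  rw [sum_comm, mul_sum]
  simp_rw [hcoord]
  rw [← sum_mul, ← mul_sum]

theorem sum_Iic_sum_div_mul_prod_choose {K ι : Type*} [Field K] [CharZero K] [Fintype ι]
    [DecidableEq ι] (m N : ℕ) (a : ι → ℕ) (hN : ∑ i, a i = N) (hN0 : N ≠ 0) :
    ∑ b ∈ Iic a, ((∑ i, b i : ℕ) : K) / N *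
        ∏ i, ((m.choose (b i) : K) * N.choose (a i - b i)) =
      m / (m + N : ℕ) * ∏ i, ((m + N).choose (a i) : K) := by
  have hid := congrArg (Nat.cast : ℕ → K) (add_mul_sum_Iic_sum_mul_prod_choose m N a)
  rw [hN] at hid
  push_cast at hid ⊢
  have hmN : (m + N : K) ≠ 0 := by norm_cast; omega
  have hN' : (N : K) ≠ 0 := by exact_mod_cast hN0
  simp_rw [div_mul_eq_mul_div, ← sum_div]
  field_simp
  linear_combination hid

theorem one_add_pow_eq_sum_range {R : Type*} [CommSemiring R] (z : R) {m K : ℕ} (hmK : m ≤ K) :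
    (1 + z) ^ m = ∑ k ∈ range (K + 1), (m.choose k : R) * z ^ k := by
  rw [add_comm, add_pow]
  refine sum_subset (range_subset_range.2 (Nat.succ_le_succ hmK)) (fun k _ hk => ?_) |>.trans ?_
  · rw [Nat.choose_eq_zero_of_lt (by simpa using hk)]
    simp
  · exact sum_congr rfl fun k _ => by rw [one_pow, mul_one, mul_comm]

section

variable {t : ℕ}

/-- The exponent of `x ^ n * ∏ i, y_i ^ a i`, where `x` is the variable `0` and `y_i` is
`i.succ`. -/
noncomputable def consExponent (n : ℕ) (a : Fin t → ℕ) : Fin (t + 1) →₀ ℕ :=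
  Finsupp.equivFunOnFinite.symm (Fin.cons n a)

theorem consExponent_le_consExponent {m n : ℕ} {a b : Fin t → ℕ} :
    consExponent m b ≤ consExponent n a ↔ m ≤ n ∧ b ≤ a := by
  rw [← Finsupp.coe_le_coe]
  exact Fin.cons_le_cons (α := fun _ => ℕ)

theorem consExponent_sub (m n : ℕ) (a b : Fin t → ℕ) :
    consExponent n a - consExponent m b = consExponent (n - m) (a - b) := by
  ext i
  refine Fin.cases ?_ (fun i => ?_) i <;> simp [consExponent]

theorem consExponent_zero : consExponent 0 (0 : Fin t → ℕ) = 0 := by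
  ext i
  refine Fin.cases ?_ (fun i => ?_) i <;> simp [consExponent]

theorem consExponent_ne_zero {n : ℕ} (hn : n ≠ 0) (a : Fin t → ℕ) :
    consExponent n a ≠ 0 :=
  fun h => hn (DFunLike.congr_fun h 0)

theorem monomial_consExponent {R : Type*} [CommSemiring R] (m : ℕ) (b : Fin t → ℕ) :
    monomial (consExponent m b) (1 : R) = X 0 ^ m * ∏ i, X i.succ ^ b i := by
  rw [monomial_one_eq, Finsupp.prod_fintype _ _ fun _ => pow_zero _, Fin.prod_univ_succ]
  simp [consExponent]

end

theorem X_zero_mul_prod_one_add_X_mul_pow {R : Type*} [CommSemiring R] {t : ℕ}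
    (G : MvPowerSeries (Fin (t + 1)) R) {m K : ℕ} (hmK : m ≤ K) :
    (X 0 * ∏ i : Fin t, (1 + X i.succ * G)) ^ m =
      ∑ b ∈ Fintype.piFinset fun _ => range (K + 1),
        C (∏ i, (m.choose (b i) : R)) * monomial (consExponent m b) 1 * G ^ ∑ i, b i := by
  simp_rw [mul_pow, ← prod_pow, one_add_pow_eq_sum_range _ hmK, prod_univ_sum, mul_sum]
  refine sum_congr rfl fun b _ => ?_
  rw [monomial_consExponent, map_prod, ← prod_pow_eq_pow_sum]
  simp only [mul_pow, prod_mul_distrib, map_natCast]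
  ring

theorem coeff_consExponent_pow_eq_sum_Iic {R : Type*} [CommSemiring R] {t : ℕ}
    {G : MvPowerSeries (Fin (t + 1)) R} (hG : G = X 0 * ∏ i : Fin t, (1 + X i.succ * G))
    {m n : ℕ} (hmn : m ≤ n) (a : Fin t → ℕ) :
    coeff (consExponent n a) (G ^ m) =
      ∑ b ∈ Iic a, (∏ i, (m.choose (b i) : R)) *
        coeff (consExponent (n - m) (a - b)) (G ^ ∑ i, b i) := by
  have hexp := X_zero_mul_prod_one_add_X_mul_pow G (le_add_right le_rfl : m ≤ m + ∑ i, a i)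
  rw [← hG] at hexp
  have hsub : Iic a ⊆ Fintype.piFinset fun _ => range (m + ∑ i, a i + 1) := fun b hb =>
    Fintype.mem_piFinset.2 fun i => mem_range.2 <| Nat.lt_succ_of_le <| (mem_Iic.1 hb i).trans <|
      (single_le_sum (fun _ _ => Nat.zero_le _) (mem_univ i)).trans (le_add_left le_rfl)
  rw [hexp, map_sum, ← sum_subset hsub]
  · refine sum_congr rfl fun b hb => ?_
    rw [mul_assoc, coeff_C_mul, coeff_monomial_mul, one_mul, if_pos, consExponent_sub]
    exact consExponent_le_consExponent.2 ⟨hmn, mem_Iic.1 hb⟩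
  · intro b _ hb
    rw [mul_assoc, coeff_C_mul, coeff_monomial_mul, if_neg, mul_zero]
    exact fun h => hb (mem_Iic.2 (consExponent_le_consExponent.1 h).2)

theorem coeff_consExponent_pow_eq_choose {K : Type*} [Field K] [CharZero K] {t : ℕ}
    {G : MvPowerSeries (Fin (t + 1)) K} (hG : G = X 0 * ∏ i : Fin t, (1 + X i.succ * G))
    (n : ℕ) (hn : 0 < n) (m : ℕ) (a : Fin t → ℕ) (hnma : n = m + ∑ i, a i) :
    coeff (consExponent n a) (G ^ m) = m / n * ∏ i, (n.choose (a i) : K) := by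
  induction n using Nat.strong_induction_on generalizing m a with
  | _ n ih =>
  -- `m = 0` is allowed because the recursion below calls the claim for `G ^ |b|` with `b = 0`.
  rcases Nat.eq_zero_or_pos m with rfl | hm
  · simp [coeff_one, consExponent_ne_zero hn.ne']
  rw [coeff_consExponent_pow_eq_sum_Iic hG (hnma ▸ le_add_right le_rfl)]
  set N := ∑ i, a i with hN
  have hnm : n - m = N := by omega
  rcases Nat.eq_zero_or_pos N with hN0 | hNpos
  · have ha : a = 0 := funext fun i => (sum_eq_zero_iff.1 (hN.symm.trans hN0)) i (mem_univ i)
    subst ha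
    rw [sum_eq_single_of_mem 0 (mem_Iic.2 le_rfl) fun b hb hb0 =>
      absurd (le_antisymm (mem_Iic.1 hb) (zero_le (a := b))) hb0]
    have hmn : (m : K) / n = 1 := by
      rw [hnma, hN0, add_zero, div_self (by exact_mod_cast hm.ne')]
    simp [hnm, hN0, consExponent_zero, hmn]
  have hterm : ∀ b ∈ Iic a, (∏ i, (m.choose (b i) : K)) *
      coeff (consExponent (n - m) (a - b)) (G ^ ∑ i, b i) =
      ((∑ i, b i : ℕ) : K) / N * ∏ i, ((m.choose (b i) : K) * N.choose (a i - b i)) := by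
    intro b hb
    have hba : ∀ i, b i ≤ a i := mem_Iic.1 hb
    have hbN : ∑ i, b i ≤ N := sum_le_sum fun i _ => hba i
    have hsplit : N = ∑ i, b i + ∑ i, (a - b) i := by
      simp only [Pi.sub_apply]
      rw [sum_tsub_distrib _ fun i _ => hba i]
      omega
    rw [hnm, ih N (by omega) hNpos _ _ hsplit, prod_mul_distrib]
    simp only [Pi.sub_apply]
    ring
  rw [sum_congr rfl hterm, sum_Iic_sum_div_mul_prod_choose m N a hN.symm hNpos.ne', hnma]

theorem tary_tree_gf_pow_coeff_general (t : ℕ)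
    (G : MvPowerSeries (Fin (t + 1)) ℚ)
    (hG : G = MvPowerSeries.X 0 * ∏ i : Fin t, (1 + MvPowerSeries.X i.succ * G))
    (n m : ℕ) (hm : 1 ≤ m) (hmn : m ≤ n) (a : Fin t → ℕ) (ha : ∑ i, a i = n - m) :
    MvPowerSeries.coeff (Finsupp.equivFunOnFinite.symm (Fin.cons n a)) (G ^ m) =
      (m / n : ℚ) * ∏ i, (n.choose (a i) : ℚ) :=
  coeff_consExponent_pow_eq_choose hG n (by omega) m a (by omega)

/-- Let `G` be a formal power series in `x, y_1, …, y_t` over `ℚ`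
(variable `0` is `x`, variable `i.succ` is `y_i`) with zero constant term satisfying
`G = x·∏_{i=1}^t (1 + y_i·G)`. Then for all `1 ≤ m ≤ n` and every tuple `a` with
`∑ a_i = n - m`, the coefficient of `x^n·y_1^{a_1}⋯y_t^{a_t}` in `G^m` equals
`(m/n)·∏_{i=1}^t C(n, a_i)`. -/
theorem tary_tree_gf_pow_coeff (t : ℕ) (ht : 1 ≤ t)
    (G : MvPowerSeries (Fin (t + 1)) ℚ)
    (hG0 : MvPowerSeries.constantCoeff G = 0)
    (hG : G = MvPowerSeries.X 0 * ∏ i : Fin t, (1 + MvPowerSeries.X i.succ * G))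
    (n m : ℕ) (hm : 1 ≤ m) (hmn : m ≤ n) (a : Fin t → ℕ) (ha : ∑ i, a i = n - m) :
    MvPowerSeries.coeff (Finsupp.equivFunOnFinite.symm (Fin.cons n a)) (G ^ m) =
      (m / n : ℚ) * ∏ i, (n.choose (a i) : ℚ) :=
  tary_tree_gf_pow_coeff_general t G hG n m hm hmn a ha
end

section
/- For every integer t ≥ 1, every integer n ≥ 1, and every tuple of natural numbers (a_1, …, a_t) with a_1 + ⋯ + a_t = n − 1, the integer n divides the product C(n,a_1)·C(n,a_2)⋯C(n,a_t) of binomial coefficients; equivalently, (1/n)·∏_{i=1}^{t} C(n,a_i) is a nonnegative integer. -/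
/-!
From `a * C(n, a) = n * C(n - 1, a - 1)`, `n` divides `a_i * P` for every factor of
`P = ∏ C(n, a_i)`, hence `n ∣ (∑ a_i) * P`. When `∑ a_i = n - 1` is coprime to `n`, this forces `n ∣ P`.
-/

open Finset

theorem Nat.dvd_mul_choose (n k : ℕ) : n ∣ k * n.choose k := by
  rcases k with _ | k
  · simp
  rcases n with _ | n
  · simp
  · exact ⟨n.choose k, by rw [mul_comm, Nat.add_one_mul_choose_eq]⟩

theorem Nat.dvd_prod_choose_of_coprime_sum {ι : Type*} (s : Finset ι) (n : ℕ) (a : ι → ℕ)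
    (hcop : n.Coprime (∑ i ∈ s, a i)) : n ∣ ∏ i ∈ s, n.choose (a i) := by
  have hdvd : n ∣ (∑ i ∈ s, a i) * ∏ i ∈ s, n.choose (a i) := by
    rw [sum_mul]
    refine dvd_sum fun i hi => ?_
    exact (Nat.dvd_mul_choose n (a i)).trans (mul_dvd_mul_left _ (dvd_prod_of_mem _ hi))
  exact hcop.dvd_of_dvd_mul_left hdvd

theorem n_dvd_prod_choose_general (t : ℕ) (n : ℕ) (hn : 1 ≤ n)
    (a : Fin t → ℕ) (ha : ∑ i, a i = n - 1) :
    n ∣ ∏ i, n.choose (a i) := by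
  refine Nat.dvd_prod_choose_of_coprime_sum _ n a ?_
  rw [ha, Nat.coprime_self_sub_right hn]
  exact Nat.coprime_one_right n

/-- For every `t ≥ 1`, `n ≥ 1`, and every tuple of natural numbers `(a_1, …, a_t)` with
`a_1 + ⋯ + a_t = n − 1`, the integer `n` divides `C(n,a_1)⋯C(n,a_t)`; equivalently
`(1/n)·∏ C(n,a_i)` is a nonnegative integer. -/
theorem n_dvd_prod_choose (t : ℕ) (ht : 1 ≤ t) (n : ℕ) (hn : 1 ≤ n)
    (a : Fin t → ℕ) (ha : ∑ i, a i = n - 1) :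
    n ∣ ∏ i, n.choose (a i) :=
  n_dvd_prod_choose_general t n hn a ha
end
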